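/- Suppose both the primal feasible set X(b) and the dual feasible set Y(c) are nonempty. Then strong duality (P* = D* with at least one problem attaining its optimum) holds under any of the following conditions: (1) there exists x ∈ relint C with −A x ∈ relint K, and b lies in the linear span of K (dual solvable); (2) there exists y ∈ relint K* with A* y ∈ relint C*, and c is orthogonal to the lineality space C ∩ (−C) of C (primal solvable); (3) there exists y ∈ relint K* with A* y ∈ relint C* and ⟨b, y⟩ = 0 (dual solvable); (4) there exists x ∈ relint C with −A x ∈ relint K and ⟨c, x⟩ = 0 (primal solvable). -/

import Mathlib

open RealInnerProductSpace Set Pointwise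

variable {E E' : Type*}
  [NormedAddCommGroup E] [InnerProductSpace ℝ E] [FiniteDimensional ℝ E]
  [NormedAddCommGroup E'] [InnerProductSpace ℝ E'] [FiniteDimensional ℝ E']

/-- A nonempty closed convex cone containing `0`. -/
structure IsClosedConvexCone {F : Type*} [NormedAddCommGroup F] [InnerProductSpace ℝ F]
    (K : Set F) : Prop where
  closed : IsClosed K
  convex : Convex ℝ K
  smul_mem : ∀ ⦃x⦄, x ∈ K → ∀ ⦃t : ℝ⦄, 0 ≤ t → t • x ∈ K
  zero_mem : (0 : F) ∈ K

/-- The dual cone `S* = {y : ⟨x,y⟩ ≥ 0 ∀ x ∈ S}`. -/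
def dualCone {F : Type*} [NormedAddCommGroup F] [InnerProductSpace ℝ F] (S : Set F) : Set F :=
  {y | ∀ x ∈ S, 0 ≤ ⟪x, y⟫}

/-- The polar cone `S° = {y : ⟨x,y⟩ ≤ 0 ∀ x ∈ S}`. -/
def polarCone {F : Type*} [NormedAddCommGroup F] [InnerProductSpace ℝ F] (S : Set F) : Set F :=
  {y | ∀ x ∈ S, ⟪x, y⟫ ≤ 0}

/-- Primal feasible set `X(b) = {x ∈ C : b - A x ∈ K}`. -/
def Xfeas (A : E →ₗ[ℝ] E') (K : Set E') (C : Set E) (b : E') : Set E :=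
  {x | x ∈ C ∧ b - A x ∈ K}

/-- Dual feasible set `Y(c) = {y ∈ K* : A* y - c ∈ C*}`. -/
def Yfeas (A : E →ₗ[ℝ] E') (K : Set E') (C : Set E) (c : E) : Set E' :=
  {y | y ∈ dualCone K ∧ LinearMap.adjoint A y - c ∈ dualCone C}

/-- Primal optimal value `P* = sup {⟨c,x⟩ : x ∈ X(b)}`. -/
noncomputable def Pval (A : E →ₗ[ℝ] E') (K : Set E') (C : Set E) (b : E') (c : E) : ℝ :=
  sSup ((fun x => ⟪c, x⟫) '' Xfeas A K C b)

/-- Dual optimal value `D* = inf {⟨b,y⟩ : y ∈ Y(c)}`. -/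
noncomputable def Dval (A : E →ₗ[ℝ] E') (K : Set E') (C : Set E) (b : E') (c : E) : ℝ :=
  sInf ((fun y => ⟪b, y⟫) '' Yfeas A K C c)

/-- Recession cone of the primal feasible region: `{x ∈ C : A x ∈ -K}`. -/
def recXSet (A : E →ₗ[ℝ] E') (K : Set E') (C : Set E) : Set E :=
  {x | x ∈ C ∧ A x ∈ -K}

/-- Recession cone of the dual feasible region: `{y ∈ K* : A* y ∈ C*}`. -/
def recYSet (A : E →ₗ[ℝ] E') (K : Set E') (C : Set E) : Set E' :=
  {y | y ∈ dualCone K ∧ LinearMap.adjoint A y ∈ dualCone C}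

/-- `X(b)` is almost feasible. -/
def AlmostFeasX (A : E →ₗ[ℝ] E') (K : Set E') (C : Set E) (b : E') : Prop :=
  ∀ ε : ℝ, 0 < ε → ∃ bε : E', ‖bε‖ ≤ ε ∧ (Xfeas A K C (b + bε)).Nonempty

/-- `Y(c)` is almost feasible. -/
def AlmostFeasY (A : E →ₗ[ℝ] E') (K : Set E') (C : Set E) (c : E) : Prop :=
  ∀ ε : ℝ, 0 < ε → ∃ cε : E, ‖cε‖ ≤ ε ∧ (Yfeas A K C (c + cε)).Nonempty

/-!
By weak duality it suffices, in each case, to produce one optimal solution whose value meets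
the optimal value of the other problem.

Under the Slater condition (1), the point `(b, P*)` is not in the relative interior of the
convex cone `G = {(A x + k, ⟪c, x⟫ - r) : x ∈ C, k ∈ K, r ≥ 0}`, since moving it upwards
would beat `P*`. A hyperplane `s t = ⟪y, z⟫` supporting `G` at `(b, P*)` inside the span of `G`
cannot be vertical (`s = 0`): then `y` would be a recession direction of the dual, and a linear
functional that is nonnegative on a cone and vanishes at a relative interior point vanishes on
the whole cone, so the Slater point would force the hyperplane to contain `G`. Hence
`y / s` is dual feasible with value at most `P*`.

Under (3), the same vanishing principle applied to `y₀` kills both terms of the duality gap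
`⟪b - A x, y⟫ + ⟪x, A* y - c⟫` for every feasible pair.

Conditions (2) and (4) are (1) and (3) for the dual problem, read as the primal problem with
data `(-A*, C*, K*, -c, -b)`; for closed cones this rewriting is an involution.
-/

open Filter Topology

lemma exists_pos_add_smul_mem_of_mem_nhds {X : Type*} [AddCommGroup X] [Module ℝ X]
    [TopologicalSpace X] [ContinuousAdd X] [ContinuousSMul ℝ X] {s : Set X} {x : X}
    (hs : s ∈ 𝓝 x) (d : X) : ∃ t : ℝ, 0 < t ∧ x + t • d ∈ s := by
  have hcont : Continuous fun t : ℝ => x + t • d := by fun_prop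
  have hlim : Tendsto (fun t : ℝ => x + t • d) (𝓝[>] 0) (𝓝 x) :=
    (hcont.tendsto' 0 x (by simp)).mono_left nhdsWithin_le_nhds
  obtain ⟨t, hts, ht⟩ := ((hlim.eventually hs).and self_mem_nhdsWithin).exists
  exact ⟨t, ht, hts⟩

lemma LinearMap.le_zero_of_le_of_smul_mem {F : Type*} [AddCommGroup F] [Module ℝ F]
    {G : Set F} (hG : ∀ g ∈ G, ∀ t : ℝ, 0 ≤ t → t • g ∈ G) (Ψ : F →ₗ[ℝ] ℝ) {β : ℝ}
    (hΨ : ∀ g ∈ G, Ψ g ≤ β) {g : F} (hg : g ∈ G) : Ψ g ≤ 0 := by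
  by_contra! hpos
  have h := hΨ _ (hG g hg ((|β| + 1) / Ψ g) (by positivity))
  rw [map_smul, smul_eq_mul, div_mul_cancel₀ _ hpos.ne'] at h
  linarith [le_abs_self β]

section NormedSpace

variable {F : Type*} [NormedAddCommGroup F] [NormedSpace ℝ F]

lemma exists_pos_add_smul_mem_of_mem_intrinsicInterior {s : Set F} {q d : F}
    (hq : q ∈ intrinsicInterior ℝ s) (hd : d ∈ (affineSpan ℝ s).direction) :
    ∃ t : ℝ, 0 < t ∧ q + t • d ∈ s := by
  obtain ⟨y, hy, rfl⟩ := mem_intrinsicInterior.1 hq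
  obtain ⟨u, hu, hus⟩ := (mem_nhds_subtype _ y _).1 (isOpen_interior.mem_nhds hy)
  obtain ⟨t, ht, htu⟩ := exists_pos_add_smul_mem_of_mem_nhds hu d
  have hspan : (y : F) + t • d ∈ affineSpan ℝ s := by
    simpa [add_comm] using AffineSubspace.vadd_mem_of_mem_direction
      ((affineSpan ℝ s).direction.smul_mem t hd) y.2
  have hmem : (⟨_, hspan⟩ : affineSpan ℝ s) ∈ Subtype.val ⁻¹' s :=
    interior_subset (hus (show (⟨_, hspan⟩ : affineSpan ℝ s) ∈ Subtype.val ⁻¹' u from htu))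
  exact ⟨t, ht, hmem⟩

theorem exists_linearMap_lt_of_forall_add_smul_notMem [FiniteDimensional ℝ F] {G : Set F}
    (hG : Convex ℝ G) (h0 : (0 : F) ∈ G) {q d : F} (hq : q ∈ Submodule.span ℝ G)
    (hd : d ∈ Submodule.span ℝ G) (hqd : ∀ t : ℝ, 0 < t → q + t • d ∉ G) :
    ∃ Ψ : F →ₗ[ℝ] ℝ, (∀ g ∈ G, Ψ g ≤ Ψ q) ∧ ∃ g ∈ G, Ψ g < Ψ q := by
  set V := Submodule.span ℝ G
  set G' : Set V := (↑) ⁻¹' G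
  have hG' : Convex ℝ G' := hG.linear_preimage V.subtype
  have hG'span : affineSpan ℝ G' = ⊤ := by
    rw [← AffineSubspace.coe_eq_univ_iff, ← Set.insert_eq_self.2 (show (0 : V) ∈ G' from h0),
      affineSpan_insert_zero, Submodule.span_span_coe_preimage, Submodule.top_coe]
  obtain ⟨a, ha⟩ := hG'.interior_nonempty_iff_affineSpan_eq_top.2 hG'span
  have hq' : (⟨q, hq⟩ : V) ∉ interior G' := fun h => by
    obtain ⟨t, ht, hmem⟩ := exists_pos_add_smul_mem_of_mem_nhds
      (isOpen_interior.mem_nhds h) (⟨d, hd⟩ : V)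
    exact hqd t ht (interior_subset (s := G') hmem)
  obtain ⟨f, hf⟩ := geometric_hahn_banach_open_point hG'.interior isOpen_interior hq'
  have hfG' : G' ⊆ {g | f g ≤ f ⟨q, hq⟩} := by
    refine subset_closure.trans ?_
    rw [← hG'.closure_interior_eq_closure_of_nonempty_interior ⟨a, ha⟩]
    exact closure_minimal (fun g hg => (hf g hg).le) (isClosed_le f.continuous continuous_const)
  obtain ⟨Ψ, hΨ⟩ := LinearMap.exists_extend (f : V →ₗ[ℝ] ℝ)
  have hΨf : ∀ v : V, Ψ v = f v := fun v => LinearMap.congr_fun hΨ v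
  refine ⟨Ψ, fun g hg => ?_, a, interior_subset (s := G') ha, ?_⟩
  · have h : f ⟨g, Submodule.subset_span hg⟩ ≤ f ⟨q, hq⟩ := hfG' hg
    rwa [← hΨf, ← hΨf] at h
  · simpa only [← hΨf] using hf a ha

end NormedSpace

section InnerProductSpace

variable {F : Type*} [NormedAddCommGroup F] [InnerProductSpace ℝ F]

lemma IsClosedConvexCone.add_mem {S : Set F} (hS : IsClosedConvexCone S) {u v : F}
    (hu : u ∈ S) (hv : v ∈ S) : u + v ∈ S := by
  have h := hS.smul_mem (hS.convex hu hv (by norm_num : (0 : ℝ) ≤ 1 / 2)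
    (by norm_num : (0 : ℝ) ≤ 1 / 2) (by norm_num)) (by norm_num : (0 : ℝ) ≤ 2)
  rwa [smul_add, smul_smul, smul_smul, show (2 : ℝ) * (1 / 2) = 1 by norm_num, one_smul,
    one_smul] at h

lemma smul_mem_dualCone {S : Set F} {y : F} (hy : y ∈ dualCone S) {t : ℝ} (ht : 0 ≤ t) :
    t • y ∈ dualCone S := fun x hx => by
  rw [real_inner_smul_right]
  exact mul_nonneg ht (hy x hx)

lemma subset_dualCone_dualCone (S : Set F) : S ⊆ dualCone (dualCone S) :=
  fun x hx _ hy => real_inner_comm x _ ▸ hy x hx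

lemma isClosedConvexCone_dualCone [CompleteSpace F] (S : Set F) :
    IsClosedConvexCone (dualCone S) where
  closed := (ProperCone.innerDual S).isClosed
  convex y₁ hy₁ y₂ hy₂ a b ha hb _ x hx := by
    rw [inner_add_right, real_inner_smul_right, real_inner_smul_right]
    exact add_nonneg (mul_nonneg ha (hy₁ x hx)) (mul_nonneg hb (hy₂ x hx))
  smul_mem _ hy _ ht := smul_mem_dualCone hy ht
  zero_mem x _ := (inner_zero_right x).ge

lemma IsClosedConvexCone.dualCone_dualCone [CompleteSpace F] {S : Set F}
    (hS : IsClosedConvexCone S) : dualCone (dualCone S) = S :=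
  let P : ProperCone ℝ F :=
    { carrier := S
      add_mem' := hS.add_mem
      zero_mem' := hS.zero_mem
      smul_mem' := fun t _ hx => hS.smul_mem hx t.2
      isClosed' := hS.closed }
  congrArg SetLike.coe (ProperCone.innerDual_innerDual P)

lemma inner_eq_zero_of_mem_intrinsicInterior {s : Set F} {q y z : F}
    (hq : q ∈ intrinsicInterior ℝ s) (hy : y ∈ dualCone s) (hqy : ⟪q, y⟫ = 0) (hz : z ∈ s) :
    ⟪z, y⟫ = 0 := by
  -- moving from `q` slightly away from `z` stays in `s`
  obtain ⟨t, ht, hmem⟩ := exists_pos_add_smul_mem_of_mem_intrinsicInterior hq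
    (AffineSubspace.vsub_mem_direction (subset_affineSpan ℝ s (intrinsicInterior_subset hq))
      (subset_affineSpan ℝ s hz))
  have h := hy _ hmem
  rw [vsub_eq_sub, inner_add_left, real_inner_smul_left, inner_sub_left, hqy] at h
  nlinarith [hy z hz]

lemma LinearMap.exists_eq_mul_sub_inner [FiniteDimensional ℝ F] (Ψ : F × ℝ →ₗ[ℝ] ℝ) :
    ∃ (y : F) (s : ℝ), ∀ z t, Ψ (z, t) = s * t - ⟪y, z⟫ := by
  refine ⟨-(InnerProductSpace.toDual ℝ F).symm (Ψ ∘ₗ LinearMap.inl ℝ F ℝ).toContinuousLinearMap,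
    Ψ (0, 1), fun z t => ?_⟩
  rw [inner_neg_left, InnerProductSpace.toDual_symm_apply, sub_neg_eq_add,
    show ((z, t) : F × ℝ) = t • (0, 1) + (z, 0) by simp, map_add, map_smul, smul_eq_mul,
    mul_comm]
  rfl

end InnerProductSpace

section ValueCone

variable {V W : Type*} [NormedAddCommGroup V] [InnerProductSpace ℝ V] [NormedAddCommGroup W]
  [InnerProductSpace ℝ W] {A : V →ₗ[ℝ] W} {K : Set W} {C : Set V} {c : V}

/-- `(b', t)` lies in `valueCone A K C c` iff some `x ∈ Xfeas A K C b'` has `t ≤ ⟪c, x⟫`. -/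
def valueCone (A : V →ₗ[ℝ] W) (K : Set W) (C : Set V) (c : V) : Set (W × ℝ) :=
  {g | ∃ x ∈ C, ∃ k ∈ K, ∃ r : ℝ, 0 ≤ r ∧ g = (A x + k, ⟪c, x⟫ - r)}

lemma mk_mem_valueCone {x : V} {k : W} {r : ℝ} (hx : x ∈ C) (hk : k ∈ K) (hr : 0 ≤ r) :
    (A x + k, ⟪c, x⟫ - r) ∈ valueCone A K C c :=
  ⟨x, hx, k, hk, r, hr, rfl⟩

lemma zero_mem_valueCone (hK : IsClosedConvexCone K) (hC : IsClosedConvexCone C) :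
    (0 : W × ℝ) ∈ valueCone A K C c := by
  simpa only [map_zero, add_zero, inner_zero_right, sub_zero, Prod.mk_zero_zero] using
    mk_mem_valueCone (A := A) (c := c) hC.zero_mem hK.zero_mem le_rfl

lemma convex_valueCone (hK : Convex ℝ K) (hC : Convex ℝ C) :
    Convex ℝ (valueCone A K C c) := by
  rintro _ ⟨x₁, hx₁, k₁, hk₁, r₁, hr₁, rfl⟩ _ ⟨x₂, hx₂, k₂, hk₂, r₂, hr₂, rfl⟩ μ ν hμ hν hμν
  refine ⟨μ • x₁ + ν • x₂, hC hx₁ hx₂ hμ hν hμν, μ • k₁ + ν • k₂, hK hk₁ hk₂ hμ hν hμν,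
    μ * r₁ + ν * r₂, by positivity, ?_⟩
  simp only [Prod.smul_mk, Prod.mk_add_mk, map_add, map_smul, smul_eq_mul, inner_add_right,
    real_inner_smul_right, Prod.mk.injEq]
  constructor
  · module
  · ring

lemma smul_mem_valueCone (hK : IsClosedConvexCone K) (hC : IsClosedConvexCone C) :
    ∀ g ∈ valueCone A K C c, ∀ t : ℝ, 0 ≤ t → t • g ∈ valueCone A K C c := by
  rintro _ ⟨x, hx, k, hk, r, hr, rfl⟩ t ht
  convert mk_mem_valueCone (A := A) (c := c) (hC.smul_mem hx ht) (hK.smul_mem hk ht)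
    (mul_nonneg ht hr) using 1
  simp only [Prod.smul_mk, map_smul, smul_add, smul_eq_mul, real_inner_smul_right, mul_sub]

lemma mk_mem_span_valueCone (hK : IsClosedConvexCone K) (hC : IsClosedConvexCone C) {b' : W}
    {x : V} (hx : x ∈ Xfeas A K C b') (t : ℝ) :
    (b', t) ∈ Submodule.span ℝ (valueCone A K C c) := by
  have hb' : (b', ⟪c, x⟫) ∈ valueCone A K C c := by
    simpa using mk_mem_valueCone (A := A) (c := c) hx.1 hx.2 le_rfl
  have hdown : ((0 : W), (-1 : ℝ)) ∈ valueCone A K C c := by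
    simpa using mk_mem_valueCone (A := A) (c := c) hC.zero_mem hK.zero_mem zero_le_one
  convert Submodule.sub_mem _ (Submodule.subset_span hb')
    (Submodule.smul_mem _ (t - ⟪c, x⟫) (Submodule.subset_span hdown)) using 1
  simp

lemma exists_mem_Xfeas_of_mem_valueCone {b' : W} {t : ℝ} (h : (b', t) ∈ valueCone A K C c) :
    ∃ x ∈ Xfeas A K C b', t ≤ ⟪c, x⟫ := by
  obtain ⟨x, hx, k, hk, r, hr, hxk⟩ := h
  simp only [Prod.mk.injEq] at hxk
  exact ⟨x, ⟨hx, by rwa [hxk.1, add_sub_cancel_left]⟩, by linarith⟩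

end ValueCone

section ConicProgram

variable {A : E →ₗ[ℝ] E'} {K : Set E'} {C : Set E} {b : E'} {c : E}

lemma duality_gap_eq (A : E →ₗ[ℝ] E') (b : E') (c x : E) (y : E') :
    ⟪b, y⟫ - ⟪c, x⟫ = ⟪b - A x, y⟫ + ⟪x, LinearMap.adjoint A y - c⟫ := by
  rw [inner_sub_left, inner_sub_right, LinearMap.adjoint_inner_right, real_inner_comm c x]
  ring

lemma weak_duality {x : E} {y : E'} (hx : x ∈ Xfeas A K C b) (hy : y ∈ Yfeas A K C c) :
    ⟪c, x⟫ ≤ ⟪b, y⟫ := by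
  linarith [duality_gap_eq A b c x y, hy.1 _ hx.2, hy.2 x hx.1]

lemma inner_le_Pval {x : E} (hY : (Yfeas A K C c).Nonempty) (hx : x ∈ Xfeas A K C b) :
    ⟪c, x⟫ ≤ Pval A K C b c :=
  let ⟨y, hy⟩ := hY
  le_csSup ⟨⟪b, y⟫, forall_mem_image.2 fun _ hx' => weak_duality hx' hy⟩ (mem_image_of_mem _ hx)

lemma Pval_le_inner {y : E'} (hX : (Xfeas A K C b).Nonempty) (hy : y ∈ Yfeas A K C c) :
    Pval A K C b c ≤ ⟪b, y⟫ :=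
  csSup_le (hX.image _) (forall_mem_image.2 fun _ hx => weak_duality hx hy)

lemma Dval_le_inner {y : E'} (hX : (Xfeas A K C b).Nonempty) (hy : y ∈ Yfeas A K C c) :
    Dval A K C b c ≤ ⟪b, y⟫ :=
  let ⟨x, hx⟩ := hX
  csInf_le ⟨⟪c, x⟫, forall_mem_image.2 fun _ hy' => weak_duality hx hy'⟩ (mem_image_of_mem _ hy)

lemma Pval_le_Dval (hX : (Xfeas A K C b).Nonempty) (hY : (Yfeas A K C c).Nonempty) :
    Pval A K C b c ≤ Dval A K C b c :=
  le_csInf (hY.image _) (forall_mem_image.2 fun _ hy => Pval_le_inner hX hy)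

lemma Pval_eq_Dval_of_inner_le_Pval {y : E'} (hX : (Xfeas A K C b).Nonempty)
    (hy : y ∈ Yfeas A K C c) (hyP : ⟪b, y⟫ ≤ Pval A K C b c) :
    Pval A K C b c = Dval A K C b c ∧ ⟪b, y⟫ = Dval A K C b c := by
  have := Dval_le_inner hX hy
  have := Pval_le_Dval hX ⟨y, hy⟩
  constructor <;> linarith

lemma inner_eq_zero_of_mem_recYSet {x₀ : E} (hx₀ : x₀ ∈ intrinsicInterior ℝ C)
    (hAx₀ : -A x₀ ∈ intrinsicInterior ℝ K) {y : E'} (hy : y ∈ recYSet A K C) :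
    (∀ x ∈ C, ⟪x, LinearMap.adjoint A y⟫ = 0) ∧ ∀ k ∈ K, ⟪k, y⟫ = 0 := by
  obtain ⟨hyK, hyC⟩ := hy
  have hC₀ := hyC x₀ (intrinsicInterior_subset hx₀)
  have hK₀ := hyK _ (intrinsicInterior_subset hAx₀)
  rw [inner_neg_left, ← LinearMap.adjoint_inner_right] at hK₀
  exact ⟨fun x hx => inner_eq_zero_of_mem_intrinsicInterior hx₀ hyC (by linarith) hx,
    fun k hk => inner_eq_zero_of_mem_intrinsicInterior hAx₀ hyK
      (by rw [inner_neg_left, ← LinearMap.adjoint_inner_right]; linarith) hk⟩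

lemma mem_dualCone_of_forall_mem_valueCone (hK : IsClosedConvexCone K)
    (hC : IsClosedConvexCone C) {y : E'} {s : ℝ}
    (h : ∀ g ∈ valueCone A K C c, s * g.2 - ⟪y, g.1⟫ ≤ 0) :
    y ∈ dualCone K ∧ LinearMap.adjoint A y - s • c ∈ dualCone C ∧ 0 ≤ s := by
  refine ⟨fun k hk => ?_, fun x hx => ?_, ?_⟩
  · have := h _ (mk_mem_valueCone (A := A) (c := c) hC.zero_mem hk le_rfl)
    simp only [map_zero, zero_add, inner_zero_right, sub_zero, mul_zero, zero_sub] at this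
    linarith [real_inner_comm k y]
  · have := h _ (mk_mem_valueCone (A := A) (c := c) hx hK.zero_mem le_rfl)
    rw [inner_sub_right, LinearMap.adjoint_inner_right, real_inner_smul_right,
      real_inner_comm c x]
    simp only [add_zero, sub_zero] at this
    linarith [real_inner_comm (A x) y]
  · have := h _ (mk_mem_valueCone (A := A) (c := c) hC.zero_mem hK.zero_mem zero_le_one)
    simp only [map_zero, add_zero, inner_zero_right, zero_sub, mul_neg, mul_one, sub_zero] at this
    linarith

lemma inner_fst_eq_zero_of_mem_valueCone {x₀ : E} (hx₀ : x₀ ∈ intrinsicInterior ℝ C)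
    (hAx₀ : -A x₀ ∈ intrinsicInterior ℝ K) {y : E'} (hy : y ∈ recYSet A K C) {g : E' × ℝ}
    (hg : g ∈ valueCone A K C c) : ⟪y, g.1⟫ = 0 := by
  obtain ⟨x, hx, k, hk, r, -, rfl⟩ := hg
  obtain ⟨hC₀, hK₀⟩ := inner_eq_zero_of_mem_recYSet hx₀ hAx₀ hy
  rw [inner_add_right, real_inner_comm, ← LinearMap.adjoint_inner_right, hC₀ x hx,
    real_inner_comm, hK₀ k hk, add_zero]

lemma smul_inv_mem_Yfeas {y : E'} {s : ℝ} (hs : 0 < s) (hyK : y ∈ dualCone K)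
    (hyC : LinearMap.adjoint A y - s • c ∈ dualCone C) : s⁻¹ • y ∈ Yfeas A K C c := by
  refine ⟨smul_mem_dualCone hyK (inv_nonneg.2 hs.le), ?_⟩
  convert smul_mem_dualCone hyC (inv_nonneg.2 hs.le) using 1
  rw [map_smul, smul_sub, smul_smul, inv_mul_cancel₀ hs.ne', one_smul]

theorem exists_mem_Yfeas_inner_le_of_slater (hK : IsClosedConvexCone K)
    (hC : IsClosedConvexCone C) (hX : (Xfeas A K C b).Nonempty) {x₀ : E}
    (hx₀ : x₀ ∈ intrinsicInterior ℝ C) (hAx₀ : -A x₀ ∈ intrinsicInterior ℝ K) {p : ℝ}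
    (hp : ∀ x ∈ Xfeas A K C b, ⟪c, x⟫ ≤ p) : ∃ y ∈ Yfeas A K C c, ⟪b, y⟫ ≤ p := by
  obtain ⟨xb, hxb⟩ := hX
  have hq := mk_mem_span_valueCone (c := c) hK hC hxb p
  have h0 : (0 : E) ∈ Xfeas A K C 0 := ⟨hC.zero_mem, by simpa using hK.zero_mem⟩
  obtain ⟨Ψ, hΨle, g₀, hg₀, hg₀lt⟩ := exists_linearMap_lt_of_forall_add_smul_notMem
    (convex_valueCone hK.convex hC.convex) (zero_mem_valueCone hK hC) hq
    (mk_mem_span_valueCone hK hC h0 1) fun t ht h => by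
      obtain ⟨x, hx, hle⟩ := exists_mem_Xfeas_of_mem_valueCone (by simpa using h)
      linarith [hp x hx]
  obtain ⟨y, s, hΨ⟩ := Ψ.exists_eq_mul_sub_inner
  have hΨG : ∀ g ∈ valueCone A K C c, s * g.2 - ⟪y, g.1⟫ ≤ 0 := fun g hg =>
    hΨ g.1 g.2 ▸ Ψ.le_zero_of_le_of_smul_mem (smul_mem_valueCone hK hC) hΨle hg
  have hΨq : 0 ≤ s * p - ⟪y, b⟫ := by
    simpa [hΨ] using hΨle 0 (zero_mem_valueCone hK hC)
  obtain ⟨hyK, hyC, hs⟩ := mem_dualCone_of_forall_mem_valueCone hK hC hΨG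
  rcases hs.eq_or_lt with rfl | hs
  · -- a vertical separating hyperplane would contain the whole cone, by the Slater condition
    have hker : valueCone A K C c ⊆ LinearMap.ker Ψ := fun g hg => by
      rw [SetLike.mem_coe, LinearMap.mem_ker, hΨ, zero_mul, zero_sub, neg_eq_zero]
      exact inner_fst_eq_zero_of_mem_valueCone hx₀ hAx₀ ⟨hyK, by simpa using hyC⟩ hg
    have := Submodule.span_le.2 hker hq
    rw [LinearMap.mem_ker] at this
    linarith [LinearMap.mem_ker.1 (hker hg₀)]
  · refine ⟨s⁻¹ • y, smul_inv_mem_Yfeas hs hyK hyC, ?_⟩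
    rw [real_inner_smul_right, real_inner_comm, inv_mul_le_iff₀ hs]
    linarith

theorem Pval_eq_Dval_of_slater (hK : IsClosedConvexCone K) (hC : IsClosedConvexCone C)
    (hX : (Xfeas A K C b).Nonempty) (hY : (Yfeas A K C c).Nonempty) {x₀ : E}
    (hx₀ : x₀ ∈ intrinsicInterior ℝ C) (hAx₀ : -A x₀ ∈ intrinsicInterior ℝ K) :
    Pval A K C b c = Dval A K C b c ∧ ∃ y ∈ Yfeas A K C c, ⟪b, y⟫ = Dval A K C b c := by
  obtain ⟨y, hy, hyP⟩ :=
    exists_mem_Yfeas_inner_le_of_slater hK hC hX hx₀ hAx₀ fun x hx => inner_le_Pval hY hx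
  obtain ⟨hPD, hyD⟩ := Pval_eq_Dval_of_inner_le_Pval hX hy hyP
  exact ⟨hPD, y, hy, hyD⟩

lemma inner_eq_inner_of_relint_dual {y₀ : E'} (hy₀ : y₀ ∈ intrinsicInterior ℝ (dualCone K))
    (hAy₀ : LinearMap.adjoint A y₀ ∈ intrinsicInterior ℝ (dualCone C)) (hby₀ : ⟪b, y₀⟫ = 0)
    {x : E} {y : E'} (hx : x ∈ Xfeas A K C b) (hy : y ∈ Yfeas A K C c) : ⟪c, x⟫ = ⟪b, y⟫ := by
  have hxK := subset_dualCone_dualCone K hx.2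
  have hxC := subset_dualCone_dualCone C hx.1
  have hK₀ := hxK y₀ (intrinsicInterior_subset hy₀)
  have hC₀ := hxC _ (intrinsicInterior_subset hAy₀)
  have hsum : ⟪y₀, b - A x⟫ + ⟪LinearMap.adjoint A y₀, x⟫ = 0 := by
    rw [inner_sub_right, LinearMap.adjoint_inner_left, real_inner_comm b y₀, hby₀]
    ring
  have hyK := inner_eq_zero_of_mem_intrinsicInterior hy₀ hxK (by linarith) hy.1
  have hyC := inner_eq_zero_of_mem_intrinsicInterior hAy₀ hxC (by linarith) hy.2
  linarith [duality_gap_eq A b c x y, real_inner_comm y (b - A x),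
    real_inner_comm (LinearMap.adjoint A y - c) x]

theorem Pval_eq_Dval_of_relint_dual (hX : (Xfeas A K C b).Nonempty)
    (hY : (Yfeas A K C c).Nonempty) {y₀ : E'} (hy₀ : y₀ ∈ intrinsicInterior ℝ (dualCone K))
    (hAy₀ : LinearMap.adjoint A y₀ ∈ intrinsicInterior ℝ (dualCone C)) (hby₀ : ⟪b, y₀⟫ = 0) :
    Pval A K C b c = Dval A K C b c ∧ ∃ y ∈ Yfeas A K C c, ⟪b, y⟫ = Dval A K C b c := by
  obtain ⟨x, hx⟩ := hX
  obtain ⟨y, hy⟩ := hY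
  have hyP : ⟪b, y⟫ ≤ Pval A K C b c :=
    (inner_eq_inner_of_relint_dual hy₀ hAy₀ hby₀ hx hy).symm.trans_le (inner_le_Pval ⟨y, hy⟩ hx)
  obtain ⟨hPD, hyD⟩ := Pval_eq_Dval_of_inner_le_Pval ⟨x, hx⟩ hy hyP
  exact ⟨hPD, y, hy, hyD⟩

lemma Xfeas_neg_adjoint :
    Xfeas (-LinearMap.adjoint A) (dualCone C) (dualCone K) (-c) = Yfeas A K C c := by
  ext y
  simp only [Xfeas, Yfeas, LinearMap.neg_apply, sub_neg_eq_add, neg_add_eq_sub]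

lemma Yfeas_neg_adjoint (hK : IsClosedConvexCone K) (hC : IsClosedConvexCone C) :
    Yfeas (-LinearMap.adjoint A) (dualCone C) (dualCone K) (-b) = Xfeas A K C b := by
  ext x
  simp only [Xfeas, Yfeas, map_neg, LinearMap.adjoint_adjoint, LinearMap.neg_apply,
    sub_neg_eq_add, neg_add_eq_sub, hK.dualCone_dualCone, hC.dualCone_dualCone]

lemma Pval_neg_adjoint :
    Pval (-LinearMap.adjoint A) (dualCone C) (dualCone K) (-c) (-b) = -Dval A K C b c := by
  rw [Pval, Xfeas_neg_adjoint, Dval, ← Real.sSup_neg]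
  congr 1
  ext t
  simp [inner_neg_left, neg_eq_iff_eq_neg]

lemma Dval_neg_adjoint (hK : IsClosedConvexCone K) (hC : IsClosedConvexCone C) :
    Dval (-LinearMap.adjoint A) (dualCone C) (dualCone K) (-c) (-b) = -Pval A K C b c := by
  rw [Dval, Yfeas_neg_adjoint hK hC, Pval, ← Real.sInf_neg]
  congr 1
  ext t
  simp [inner_neg_left, neg_eq_iff_eq_neg]

theorem Pval_eq_Dval_of_neg_adjoint (hK : IsClosedConvexCone K) (hC : IsClosedConvexCone C)
    (h : Pval (-LinearMap.adjoint A) (dualCone C) (dualCone K) (-c) (-b) =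
        Dval (-LinearMap.adjoint A) (dualCone C) (dualCone K) (-c) (-b) ∧
      ∃ x ∈ Yfeas (-LinearMap.adjoint A) (dualCone C) (dualCone K) (-b),
        ⟪-c, x⟫ = Dval (-LinearMap.adjoint A) (dualCone C) (dualCone K) (-c) (-b)) :
    Pval A K C b c = Dval A K C b c ∧ ∃ x ∈ Xfeas A K C b, ⟪c, x⟫ = Pval A K C b c := by
  rw [Pval_neg_adjoint, Dval_neg_adjoint hK hC, Yfeas_neg_adjoint hK hC] at h
  obtain ⟨hPD, x, hx, hxP⟩ := h
  rw [inner_neg_left, neg_inj] at hxP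
  exact ⟨(neg_inj.1 hPD).symm, x, hx, hxP⟩

end ConicProgram

theorem stmt2 (A : E →ₗ[ℝ] E') (K : Set E') (C : Set E)
    (hK : IsClosedConvexCone K) (hC : IsClosedConvexCone C) (b : E') (c : E)
    (hXne : (Xfeas A K C b).Nonempty) (hYne : (Yfeas A K C c).Nonempty) :
    ((∃ x ∈ intrinsicInterior ℝ C, -A x ∈ intrinsicInterior ℝ K) ∧ b ∈ Submodule.span ℝ K →
      Pval A K C b c = Dval A K C b c ∧
        ∃ y ∈ Yfeas A K C c, ⟪b, y⟫ = Dval A K C b c) ∧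
    ((∃ y ∈ intrinsicInterior ℝ (dualCone K),
          LinearMap.adjoint A y ∈ intrinsicInterior ℝ (dualCone C)) ∧
        (∀ z ∈ C ∩ -C, ⟪c, z⟫ = 0) →
      Pval A K C b c = Dval A K C b c ∧
        ∃ x ∈ Xfeas A K C b, ⟪c, x⟫ = Pval A K C b c) ∧
    ((∃ y ∈ intrinsicInterior ℝ (dualCone K),
          LinearMap.adjoint A y ∈ intrinsicInterior ℝ (dualCone C) ∧ ⟪b, y⟫ = 0) →
      Pval A K C b c = Dval A K C b c ∧
        ∃ y ∈ Yfeas A K C c, ⟪b, y⟫ = Dval A K C b c) ∧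
    ((∃ x ∈ intrinsicInterior ℝ C, -A x ∈ intrinsicInterior ℝ K ∧ ⟪c, x⟫ = 0) →
      Pval A K C b c = Dval A K C b c ∧
        ∃ x ∈ Xfeas A K C b, ⟪c, x⟫ = Pval A K C b c) := by
  have hX' : (Xfeas (-LinearMap.adjoint A) (dualCone C) (dualCone K) (-c)).Nonempty := by
    rwa [Xfeas_neg_adjoint]
  have hY' : (Yfeas (-LinearMap.adjoint A) (dualCone C) (dualCone K) (-b)).Nonempty := by
    rwa [Yfeas_neg_adjoint hK hC]
  refine ⟨fun ⟨⟨x₀, hx₀, hAx₀⟩, _⟩ => ?_, fun ⟨⟨y₀, hy₀, hAy₀⟩, _⟩ => ?_,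
    fun ⟨y₀, hy₀, hAy₀, hby₀⟩ => ?_, fun ⟨x₀, hx₀, hAx₀, hcx₀⟩ => ?_⟩
  · exact Pval_eq_Dval_of_slater hK hC hXne hYne hx₀ hAx₀
  · exact Pval_eq_Dval_of_neg_adjoint hK hC <| Pval_eq_Dval_of_slater
      (isClosedConvexCone_dualCone C) (isClosedConvexCone_dualCone K) hX' hY' hy₀
      (by simpa using hAy₀)
  · exact Pval_eq_Dval_of_relint_dual hXne hYne hy₀ hAy₀ hby₀
  · exact Pval_eq_Dval_of_neg_adjoint hK hC <| Pval_eq_Dval_of_relint_dual hX' hY'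
      (by rwa [hC.dualCone_dualCone]) (by simpa [hK.dualCone_dualCone] using hAx₀)
      (by simpa using hcx₀)
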